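/- Let λ be Lebesgue measure on ℝ and define u : ℝ → ℝ by u := χ_{[−1,0]} + Σ_{i=1}^∞ 2^{−i} χ_{(2^{−i−1}, 2^{−i}]}. Then u^∧(0) = 0 and u^∨(0) = 1, and for every integer i ≥ 1, u^∧(2^{−i−1}) = 2^{−i−1} and u^∨(2^{−i−1}) = 2^{−i}. In particular the points 2^{−i−1} belong to the jump set S_u := {u^∧ < u^∨}, they converge to the jump point 0, but u^∨(2^{−i−1}) → 0 ≠ 1 = u^∨(0), so u^∨ restricted to S_u is not continuous at 0. -/

import Mathlib

open MeasureTheory Metric Filter Set Topology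
open scoped ENNReal NNReal

/-- The function `u = χ_{[-1,0]} + Σ_{i≥1} 2^{-i} χ_{(2^{-i-1}, 2^{-i}]}` of Example 5.5
(the series is indexed by `j = i - 1 : ℕ`). -/
noncomputable def uStep : ℝ → ℝ := fun x =>
  Set.indicator (Set.Icc (-1 : ℝ) 0) (fun _ => (1 : ℝ)) x +
  ∑' j : ℕ, Set.indicator (Set.Ioc ((2 : ℝ) ^ (-(j : ℤ) - 2)) ((2 : ℝ) ^ (-(j : ℤ) - 1)))
    (fun _ => (2 : ℝ) ^ (-(j : ℤ) - 1)) x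

/-- The upper approximate limit `u^∨(x)` with respect to Lebesgue measure on `ℝ`. -/
noncomputable def upperApproxLimit (u : ℝ → ℝ) (x : ℝ) : EReal :=
  sInf {t : EReal |
    Tendsto (fun r : ℝ => volume (ball x r ∩ {y | t < (u y : EReal)}) / volume (ball x r))
      (𝓝[>] (0 : ℝ)) (𝓝 0)}

/-- The lower approximate limit `u^∧(x)` with respect to Lebesgue measure on `ℝ`. -/
noncomputable def lowerApproxLimit (u : ℝ → ℝ) (x : ℝ) : EReal :=
  sSup {t : EReal |
    Tendsto (fun r : ℝ => volume (ball x r ∩ {y | (u y : EReal) < t}) / volume (ball x r))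
      (𝓝[>] (0 : ℝ)) (𝓝 0)}

/-- The jump set `S_u = {u^∧ < u^∨}`. -/
def jumpSet (u : ℝ → ℝ) : Set ℝ := {x | lowerApproxLimit u x < upperApproxLimit u x}

/-! ### Auxiliary lemmas -/

lemma two_zpow_pos (m : ℤ) : (0:ℝ) < 2 ^ m := by positivity

lemma two_zpow_mono {m n : ℤ} (h : m ≤ n) : (2:ℝ) ^ m ≤ 2 ^ n :=
  zpow_le_zpow_right₀ one_le_two h

lemma two_zpow_eq (n : ℕ) : (2:ℝ)^(-(n:ℤ)-1) = (1/2:ℝ)^(n+1) := by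
  rw [one_div, inv_pow, ← zpow_natCast (2:ℝ) (n+1), ← zpow_neg]
  congr 1
  push_cast
  ring

lemma two_zpow_succ (m : ℤ) : (2:ℝ)^(m+1) = 2 * 2^m := by
  rw [zpow_add₀ (two_ne_zero : (2:ℝ) ≠ 0), zpow_one]; ring

lemma uStep_on_Icc {x : ℝ} (hx : x ∈ Icc (-1:ℝ) 0) : uStep x = 1 := by
  unfold uStep
  rw [indicator_of_mem hx]
  have h0 : ∀ j : ℕ, Set.indicator
      (Ioc ((2:ℝ)^(-(j:ℤ)-2)) ((2:ℝ)^(-(j:ℤ)-1))) (fun _ => (2:ℝ)^(-(j:ℤ)-1)) x = 0 := by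
    intro j
    apply indicator_of_notMem
    intro hmem
    have h1 := hmem.1
    have hp : (0:ℝ) < 2^(-(j:ℤ)-2) := two_zpow_pos _
    have := hx.2
    linarith
  rw [tsum_congr h0, tsum_zero]
  norm_num

lemma uStep_on_Ioc (j : ℕ) {x : ℝ}
    (hx : x ∈ Ioc ((2:ℝ)^(-(j:ℤ)-2)) ((2:ℝ)^(-(j:ℤ)-1))) :
    uStep x = (2:ℝ)^(-(j:ℤ)-1) := by
  unfold uStep
  have hxpos : (0:ℝ) < x := lt_trans (two_zpow_pos _) hx.1
  rw [indicator_of_notMem (by intro h; exact absurd h.2 (not_le.mpr hxpos))]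
  rw [tsum_eq_single j ?_, indicator_of_mem hx]
  · ring
  · intro k hk
    apply indicator_of_notMem
    intro hmem
    rcases lt_or_gt_of_ne hk with hlt | hgt
    · have h1 : (-(j:ℤ)-1) ≤ (-(k:ℤ)-2) := by
        have : (k:ℤ) + 1 ≤ j := by exact_mod_cast hlt
        linarith
      have := two_zpow_mono h1
      have := hmem.1
      have := hx.2
      linarith
    · have h1 : (-(k:ℤ)-1) ≤ (-(j:ℤ)-2) := by
        have : (j:ℤ) + 1 ≤ k := by exact_mod_cast hgt
        linarith
      have := two_zpow_mono h1
      have := hmem.2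
      have := hx.1
      linarith

lemma uStep_nonneg (x : ℝ) : 0 ≤ uStep x := by
  unfold uStep
  have h1 : 0 ≤ Set.indicator (Icc (-1:ℝ) 0) (fun _ => (1:ℝ)) x :=
    indicator_nonneg (fun _ _ => zero_le_one) x
  have h2 : 0 ≤ ∑' j : ℕ, Set.indicator
      (Ioc ((2:ℝ)^(-(j:ℤ)-2)) ((2:ℝ)^(-(j:ℤ)-1))) (fun _ => (2:ℝ)^(-(j:ℤ)-1)) x :=
    tsum_nonneg (fun j => indicator_nonneg (fun _ _ => le_of_lt (two_zpow_pos _)) x)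
  linarith

lemma exists_index {x : ℝ} (hx0 : 0 < x) (hx : x ≤ 1/2) :
    ∃ j : ℕ, x ∈ Ioc ((2:ℝ)^(-(j:ℤ)-2)) ((2:ℝ)^(-(j:ℤ)-1)) := by
  have hex : ∃ n : ℕ, (2:ℝ)^(-(n:ℤ)-1) < x := by
    obtain ⟨n, hn⟩ := exists_pow_lt_of_lt_one hx0 (by norm_num : (1/2:ℝ) < 1)
    refine ⟨n, ?_⟩
    rw [two_zpow_eq]
    calc (1/2:ℝ)^(n+1) ≤ (1/2:ℝ)^n := by
          apply pow_le_pow_of_le_one (by norm_num) (by norm_num) (Nat.le_succ n)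
      _ < x := hn
  classical
  set n₀ := Nat.find hex with hn₀
  have hspec : (2:ℝ)^(-(n₀:ℤ)-1) < x := Nat.find_spec hex
  have hne : n₀ ≠ 0 := by
    intro h
    rw [h] at hspec
    norm_num at hspec
    linarith
  obtain ⟨j, hj⟩ : ∃ j, n₀ = j + 1 :=
    ⟨n₀ - 1, (Nat.succ_pred_eq_of_pos (Nat.pos_of_ne_zero hne)).symm⟩
  refine ⟨j, ?_, ?_⟩
  · have : (-(j:ℤ)-2) = (-(n₀:ℤ)-1) := by rw [hj]; push_cast; ring
    rw [this]; exact hspec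
  · have := Nat.find_min hex (by omega : j < n₀)
    exact le_of_not_gt this

lemma uStep_zero_of_gt {x : ℝ} (hx : 1/2 < x) : uStep x = 0 := by
  unfold uStep
  rw [indicator_of_notMem (by intro h; have := h.2; linarith)]
  have h0 : ∀ j : ℕ, Set.indicator
      (Ioc ((2:ℝ)^(-(j:ℤ)-2)) ((2:ℝ)^(-(j:ℤ)-1))) (fun _ => (2:ℝ)^(-(j:ℤ)-1)) x = 0 := by
    intro j
    apply indicator_of_notMem
    intro hmem
    have h1 : (2:ℝ)^(-(j:ℤ)-1) ≤ 2^(-1:ℤ) := two_zpow_mono (by omega)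
    have h2 := hmem.2
    norm_num at h1
    linarith
  rw [tsum_congr h0, tsum_zero]
  ring

lemma uStep_le_one (x : ℝ) : uStep x ≤ 1 := by
  rcases le_or_gt x 0 with hx | hx
  · rcases le_or_gt (-1:ℝ) x with h1 | h1
    · rw [uStep_on_Icc ⟨h1, hx⟩]
    · unfold uStep
      rw [indicator_of_notMem (by intro h; exact absurd h.1 (not_le.mpr h1))]
      have h0 : ∀ j : ℕ, Set.indicator
          (Ioc ((2:ℝ)^(-(j:ℤ)-2)) ((2:ℝ)^(-(j:ℤ)-1))) (fun _ => (2:ℝ)^(-(j:ℤ)-1)) x = 0 := by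
        intro j
        apply indicator_of_notMem
        intro hmem
        have := hmem.1
        have := two_zpow_pos (-(j:ℤ)-2)
        linarith
      rw [tsum_congr h0, tsum_zero]
      norm_num
  · rcases le_or_gt x (1/2) with h1 | h1
    · obtain ⟨j, hj⟩ := exists_index hx h1
      rw [uStep_on_Ioc j hj]
      have : (2:ℝ)^(-(j:ℤ)-1) ≤ 2^(-1:ℤ) := two_zpow_mono (by omega)
      norm_num at this ⊢
    · rw [uStep_zero_of_gt h1]
      norm_num

lemma uStep_lt_two_mul {y : ℝ} (h0 : 0 < y) (h1 : y ≤ 1/2) : uStep y < 2*y := by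
  obtain ⟨j, hj⟩ := exists_index h0 h1
  rw [uStep_on_Ioc j hj]
  have heq : (2:ℝ)^(-(j:ℤ)-1) = 2 * 2^(-(j:ℤ)-2) := by
    rw [show (-(j:ℤ)-1) = 1 + (-(j:ℤ)-2) by ring, zpow_add₀ (two_ne_zero), zpow_one]
  rw [heq]
  have := hj.1
  linarith

lemma uStep_right (i : ℕ) (hi : 1 ≤ i) {y : ℝ}
    (h1 : (2:ℝ)^(-(i:ℤ)-1) < y) (h2 : y ≤ (2:ℝ)^(-(i:ℤ))) :
    uStep y = (2:ℝ)^(-(i:ℤ)) := by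
  obtain ⟨j, hj⟩ : ∃ j : ℕ, i = j + 1 := ⟨i - 1, by omega⟩
  have e1 : (-(j:ℤ)-2) = (-(i:ℤ)-1) := by rw [hj]; push_cast; ring
  have e2 : (-(j:ℤ)-1) = (-(i:ℤ)) := by rw [hj]; push_cast; ring
  rw [← e2]
  exact uStep_on_Ioc j ⟨by rw [e1]; exact h1, by rw [e2]; exact h2⟩

lemma helper_mem {x : ℝ} {S : Set ℝ} {δ : ℝ} (hδ : 0 < δ)
    (h : ∀ y ∈ ball x δ, y ∉ S) :
    Tendsto (fun r : ℝ => volume (ball x r ∩ S) / volume (ball x r)) (𝓝[>] (0:ℝ)) (𝓝 0) := by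
  have hev : (fun _ : ℝ => (0:ℝ≥0∞)) =ᶠ[𝓝[>] (0:ℝ)]
      (fun r => volume (ball x r ∩ S) / volume (ball x r)) := by
    filter_upwards [Ioc_mem_nhdsGT_of_mem (⟨le_refl 0, hδ⟩ : (0:ℝ) ∈ Ico 0 δ)] with r hr
    have hempty : ball x r ∩ S = ∅ := by
      ext y
      simp only [mem_inter_iff, mem_empty_iff_false, iff_false, not_and]
      intro hy
      exact h y (ball_subset_ball hr.2 hy)
    rw [hempty]
    simp
  exact Tendsto.congr' hev tendsto_const_nhds

lemma helper_not {x : ℝ} {S : Set ℝ} {δ : ℝ} (hδ : 0 < δ)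
    (h : ∀ r : ℝ, 0 < r → r < δ → ENNReal.ofReal r ≤ volume (ball x r ∩ S)) :
    ¬ Tendsto (fun r : ℝ => volume (ball x r ∩ S) / volume (ball x r)) (𝓝[>] (0:ℝ)) (𝓝 0) := by
  intro ht
  have h1 : ∀ᶠ r in 𝓝[>] (0:ℝ),
      volume (ball x r ∩ S) / volume (ball x r) < 1/2 :=
    ht.eventually (gt_mem_nhds (by norm_num))
  have h2 : ∀ᶠ r in 𝓝[>] (0:ℝ),
      (1/2 : ℝ≥0∞) ≤ volume (ball x r ∩ S) / volume (ball x r) := by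
    filter_upwards [Ioo_mem_nhdsGT_of_mem (⟨le_refl 0, hδ⟩ : (0:ℝ) ∈ Ico 0 δ)] with r hr
    have hrpos : 0 < r := hr.1
    have hb : volume (ball x r) = ENNReal.ofReal (2 * r) := Real.volume_ball x r
    have key : (1/2 : ℝ≥0∞) = ENNReal.ofReal r / ENNReal.ofReal (2*r) := by
      rw [← ENNReal.ofReal_div_of_pos (by linarith)]
      rw [show r / (2*r) = 1/2 by field_simp]
      rw [show (1/2 : ℝ≥0∞) = ENNReal.ofReal (1/2) by
        rw [ENNReal.ofReal_div_of_pos (by norm_num)]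
        simp]
    rw [key, hb]
    exact ENNReal.div_le_div_right (h r hrpos hr.2) _
  obtain ⟨r, hlt, hle⟩ := (h1.and h2).exists
  exact absurd hle hlt.not_ge

lemma lower_at_zero : lowerApproxLimit uStep 0 = (0 : EReal) := by
  have hset : {t : EReal |
      Tendsto (fun r : ℝ => volume (ball (0:ℝ) r ∩ {y | (uStep y : EReal) < t}) /
        volume (ball (0:ℝ) r)) (𝓝[>] (0:ℝ)) (𝓝 0)} = Iic (0 : EReal) := by
    ext t
    simp only [mem_setOf_eq, mem_Iic]
    constructor
    · intro ht
      by_contra hlt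
      push_neg at hlt
      obtain ⟨c, hc0, hct⟩ := EReal.lt_iff_exists_real_btwn.mp hlt
      have hc0' : (0:ℝ) < c := by exact_mod_cast hc0
      refine helper_not (δ := min (1/2) (c/2)) (lt_min (by norm_num) (by linarith)) ?_ ht
      intro r hr hrδ
      have hr1 : r < 1/2 := lt_of_lt_of_le hrδ (min_le_left _ _)
      have hr2 : r < c/2 := lt_of_lt_of_le hrδ (min_le_right _ _)
      calc ENNReal.ofReal r = volume (Ioo (0:ℝ) r) := by rw [Real.volume_Ioo]; norm_num
        _ ≤ volume (ball (0:ℝ) r ∩ {y | (uStep y : EReal) < t}) := by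
            apply measure_mono
            intro y hy
            refine ⟨?_, ?_⟩
            · rw [mem_ball, Real.dist_eq, abs_lt]
              constructor <;> [linarith [hy.1, hy.2]; linarith [hy.1, hy.2]]
            · show (uStep y : EReal) < t
              have hy1 := hy.1
              have hy2 := hy.2
              have hu : uStep y < c := by
                have := uStep_lt_two_mul hy1 (by linarith)
                linarith
              exact lt_trans (by exact_mod_cast hu) hct
    · intro ht
      apply helper_mem one_pos
      intro y _ hmem
      have hge : (0 : EReal) ≤ (uStep y : EReal) := by exact_mod_cast uStep_nonneg y
      exact absurd (lt_of_lt_of_le hmem ht) hge.not_gt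
  rw [lowerApproxLimit, hset, csSup_Iic]

lemma upper_at_zero : upperApproxLimit uStep 0 = (1 : EReal) := by
  have hset : {t : EReal |
      Tendsto (fun r : ℝ => volume (ball (0:ℝ) r ∩ {y | t < (uStep y : EReal)}) /
        volume (ball (0:ℝ) r)) (𝓝[>] (0:ℝ)) (𝓝 0)} = Ici (1 : EReal) := by
    ext t
    simp only [mem_setOf_eq, mem_Ici]
    constructor
    · intro ht
      by_contra hlt
      push_neg at hlt
      refine helper_not (δ := 1) one_pos ?_ ht
      intro r hr hrδ
      calc ENNReal.ofReal r = volume (Ioo (-r) (0:ℝ)) := by rw [Real.volume_Ioo]; norm_num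
        _ ≤ volume (ball (0:ℝ) r ∩ {y | t < (uStep y : EReal)}) := by
            apply measure_mono
            intro y hy
            refine ⟨?_, ?_⟩
            · rw [mem_ball, Real.dist_eq, abs_lt]
              constructor <;> [linarith [hy.1]; linarith [hy.2]]
            · show t < (uStep y : EReal)
              have hu : uStep y = 1 := uStep_on_Icc ⟨by linarith [hy.1], le_of_lt hy.2⟩
              rw [hu]
              exact lt_of_lt_of_le hlt (by norm_num)
    · intro ht
      apply helper_mem one_pos
      intro y _ hmem
      have hle : (uStep y : EReal) ≤ (1 : EReal) := by exact_mod_cast uStep_le_one y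
      exact absurd ht (not_le.mpr (lt_of_lt_of_le hmem hle))
  rw [upperApproxLimit, hset, csInf_Ici]

lemma lower_at_pt (i : ℕ) (hi : 1 ≤ i) :
    lowerApproxLimit uStep ((2:ℝ)^(-(i:ℤ)-1)) = (((2:ℝ)^(-(i:ℤ)-1) : ℝ) : EReal) := by
  set b := (2:ℝ)^(-(i:ℤ)-1) with hbdef
  have hb2 : b = 2 * (2:ℝ)^(-(i:ℤ)-2) := by
    rw [hbdef, show (-(i:ℤ)-1) = (-(i:ℤ)-2)+1 by ring, two_zpow_succ]
  have ha : (2:ℝ)^(-(i:ℤ)-2) = b/2 := by rw [hb2]; ring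
  have hc : (2:ℝ)^(-(i:ℤ)) = 2*b := by
    rw [show (2:ℝ)^(-(i:ℤ)) = 2^((-(i:ℤ)-1)+1) by congr 1; ring, two_zpow_succ, hbdef]
  have hbpos : 0 < b := two_zpow_pos _
  have hloc : ∀ y ∈ ball b (b/2), b ≤ uStep y := by
    intro y hy
    rw [mem_ball, Real.dist_eq, abs_lt] at hy
    rcases le_or_gt y b with h | h
    · have : uStep y = b := uStep_on_Ioc i ⟨by rw [ha]; linarith [hy.1], h⟩
      linarith
    · have : uStep y = 2*b := by
        rw [← hc]
        exact uStep_right i hi h (by rw [hc]; linarith [hy.2])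
      linarith
  have hset : {t : EReal |
      Tendsto (fun r : ℝ => volume (ball b r ∩ {y | (uStep y : EReal) < t}) /
        volume (ball b r)) (𝓝[>] (0:ℝ)) (𝓝 0)} = Iic ((b : ℝ) : EReal) := by
    ext t
    simp only [mem_setOf_eq, mem_Iic]
    constructor
    · intro ht
      by_contra hlt
      push_neg at hlt
      refine helper_not (δ := b/2) (by linarith) ?_ ht
      intro r hr hrδ
      calc ENNReal.ofReal r = volume (Ioo (b-r) b) := by rw [Real.volume_Ioo]; norm_num
        _ ≤ volume (ball b r ∩ {y | (uStep y : EReal) < t}) := by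
            apply measure_mono
            intro y hy
            refine ⟨?_, ?_⟩
            · rw [mem_ball, Real.dist_eq, abs_lt]
              constructor <;> [linarith [hy.1]; linarith [hy.2]]
            · show (uStep y : EReal) < t
              have hu : uStep y = b :=
                uStep_on_Ioc i ⟨by rw [ha]; linarith [hy.1], le_of_lt hy.2⟩
              rw [hu]
              exact hlt
    · intro ht
      apply helper_mem (by linarith : (0:ℝ) < b/2)
      intro y hy hmem
      have hge : ((b:ℝ) : EReal) ≤ (uStep y : EReal) := by exact_mod_cast hloc y hy
      exact absurd (lt_of_lt_of_le hmem ht) hge.not_gt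
  rw [lowerApproxLimit, hset, csSup_Iic]

lemma upper_at_pt (i : ℕ) (hi : 1 ≤ i) :
    upperApproxLimit uStep ((2:ℝ)^(-(i:ℤ)-1)) = (((2:ℝ)^(-(i:ℤ)) : ℝ) : EReal) := by
  set b := (2:ℝ)^(-(i:ℤ)-1) with hbdef
  have hb2 : b = 2 * (2:ℝ)^(-(i:ℤ)-2) := by
    rw [hbdef, show (-(i:ℤ)-1) = (-(i:ℤ)-2)+1 by ring, two_zpow_succ]
  have ha : (2:ℝ)^(-(i:ℤ)-2) = b/2 := by rw [hb2]; ring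
  have hc : (2:ℝ)^(-(i:ℤ)) = 2*b := by
    rw [show (2:ℝ)^(-(i:ℤ)) = 2^((-(i:ℤ)-1)+1) by congr 1; ring, two_zpow_succ, hbdef]
  have hbpos : 0 < b := two_zpow_pos _
  have hloc : ∀ y ∈ ball b (b/2), uStep y ≤ 2*b := by
    intro y hy
    rw [mem_ball, Real.dist_eq, abs_lt] at hy
    rcases le_or_gt y b with h | h
    · have : uStep y = b := uStep_on_Ioc i ⟨by rw [ha]; linarith [hy.1], h⟩
      linarith
    · have : uStep y = 2*b := by
        rw [← hc]
        exact uStep_right i hi h (by rw [hc]; linarith [hy.2])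
      linarith
  have hset : {t : EReal |
      Tendsto (fun r : ℝ => volume (ball b r ∩ {y | t < (uStep y : EReal)}) /
        volume (ball b r)) (𝓝[>] (0:ℝ)) (𝓝 0)} = Ici ((2*b : ℝ) : EReal) := by
    ext t
    simp only [mem_setOf_eq, mem_Ici]
    constructor
    · intro ht
      by_contra hlt
      push_neg at hlt
      refine helper_not (δ := b/2) (by linarith) ?_ ht
      intro r hr hrδ
      calc ENNReal.ofReal r = volume (Ioo b (b+r)) := by rw [Real.volume_Ioo]; norm_num
        _ ≤ volume (ball b r ∩ {y | t < (uStep y : EReal)}) := by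
            apply measure_mono
            intro y hy
            refine ⟨?_, ?_⟩
            · rw [mem_ball, Real.dist_eq, abs_lt]
              constructor <;> [linarith [hy.1]; linarith [hy.2]]
            · show t < (uStep y : EReal)
              have hu : uStep y = 2*b := by
                rw [← hc]
                exact uStep_right i hi hy.1 (by rw [hc]; linarith [hy.2])
              rw [hu]
              exact hlt
    · intro ht
      apply helper_mem (by linarith : (0:ℝ) < b/2)
      intro y hy hmem
      have hle : (uStep y : EReal) ≤ ((2*b : ℝ) : EReal) := by exact_mod_cast hloc y hy
      exact absurd ht (not_le.mpr (lt_of_lt_of_le hmem hle))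
  rw [upperApproxLimit, hset, csInf_Ici, hc]

lemma tendsto_pts : Tendsto (fun i : ℕ => (2 : ℝ) ^ (-(i : ℤ) - 1)) atTop (𝓝 0) := by
  have h : Tendsto (fun i : ℕ => (1/2 : ℝ)^(i+1)) atTop (𝓝 0) :=
    (tendsto_pow_atTop_nhds_zero_of_lt_one (by norm_num) (by norm_num)).comp
      (tendsto_add_atTop_nat 1)
  exact h.congr (fun i => (two_zpow_eq i).symm)

theorem uStep_upperApproxLimit_not_continuous_on_jumpSet :
    lowerApproxLimit uStep 0 = (0 : EReal) ∧
    upperApproxLimit uStep 0 = (1 : EReal) ∧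
    (∀ i : ℕ, 1 ≤ i →
      lowerApproxLimit uStep ((2 : ℝ) ^ (-(i : ℤ) - 1)) = (((2 : ℝ) ^ (-(i : ℤ) - 1) : ℝ) : EReal) ∧
      upperApproxLimit uStep ((2 : ℝ) ^ (-(i : ℤ) - 1)) = (((2 : ℝ) ^ (-(i : ℤ)) : ℝ) : EReal)) ∧
    (∀ i : ℕ, 1 ≤ i → (2 : ℝ) ^ (-(i : ℤ) - 1) ∈ jumpSet uStep) ∧
    (0 : ℝ) ∈ jumpSet uStep ∧
    Tendsto (fun i : ℕ => (2 : ℝ) ^ (-(i : ℤ) - 1)) atTop (𝓝 0) ∧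
    Tendsto (fun i : ℕ => upperApproxLimit uStep ((2 : ℝ) ^ (-(i : ℤ) - 1))) atTop
      (𝓝 (0 : EReal)) ∧
    ¬ ContinuousWithinAt (fun x => upperApproxLimit uStep x) (jumpSet uStep) 0 := by
  have hjump_pt : ∀ i : ℕ, 1 ≤ i → (2 : ℝ) ^ (-(i : ℤ) - 1) ∈ jumpSet uStep := by
    intro i hi
    show lowerApproxLimit uStep _ < upperApproxLimit uStep _
    rw [lower_at_pt i hi, upper_at_pt i hi]
    have h1 : (2:ℝ)^(-(i:ℤ)) = 2 * 2^(-(i:ℤ)-1) := by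
      rw [show (2:ℝ)^(-(i:ℤ)) = 2^((-(i:ℤ)-1)+1) by congr 1; ring, two_zpow_succ]
    have h2 := two_zpow_pos (-(i:ℤ)-1)
    exact EReal.coe_lt_coe_iff.mpr (by linarith)
  have hjump0 : (0:ℝ) ∈ jumpSet uStep := by
    show lowerApproxLimit uStep _ < upperApproxLimit uStep _
    rw [lower_at_zero, upper_at_zero]
    exact zero_lt_one
  have htendsto_upper : Tendsto (fun i : ℕ => upperApproxLimit uStep ((2 : ℝ) ^ (-(i : ℤ) - 1)))
      atTop (𝓝 (0 : EReal)) := by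
    have hreal : Tendsto (fun i : ℕ => (2:ℝ)^(-(i:ℤ))) atTop (𝓝 0) := by
      have h : Tendsto (fun i : ℕ => (1/2 : ℝ)^i) atTop (𝓝 0) :=
        tendsto_pow_atTop_nhds_zero_of_lt_one (by norm_num) (by norm_num)
      refine h.congr (fun i => ?_)
      rw [one_div, inv_pow, ← zpow_natCast (2:ℝ) i, ← zpow_neg]
    have hcoe : Tendsto (fun i : ℕ => (((2:ℝ)^(-(i:ℤ)) : ℝ) : EReal)) atTop (𝓝 (0 : EReal)) := by
      rw [show (0 : EReal) = ((0:ℝ) : EReal) by norm_num]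
      exact EReal.tendsto_coe.mpr hreal
    refine Tendsto.congr' ?_ hcoe
    filter_upwards [eventually_ge_atTop 1] with i hi
    exact (upper_at_pt i hi).symm
  refine ⟨lower_at_zero, upper_at_zero, fun i hi => ⟨lower_at_pt i hi, upper_at_pt i hi⟩,
    hjump_pt, hjump0, tendsto_pts, htendsto_upper, ?_⟩
  intro hcont
  have hseq : Tendsto (fun i : ℕ => (2 : ℝ) ^ (-(i : ℤ) - 1)) atTop
      (𝓝[jumpSet uStep] (0:ℝ)) := by
    rw [tendsto_nhdsWithin_iff]
    exact ⟨tendsto_pts, Eventually.mono (eventually_ge_atTop 1) (fun i hi => hjump_pt i hi)⟩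
  have hcomp : Tendsto (fun i : ℕ => upperApproxLimit uStep ((2 : ℝ) ^ (-(i : ℤ) - 1)))
      atTop (𝓝 (upperApproxLimit uStep 0)) := hcont.tendsto.comp hseq
  rw [upper_at_zero] at hcomp
  have := tendsto_nhds_unique htendsto_upper hcomp
  exact absurd this (by norm_num)
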